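/- Let N ≥ 3, 1 < k < N-1, 0 < p < (N-1)/(k-1) and c > 0, and let (γ_n) be defined by γ_0 = k-1 and γ_{n+1} = p γ_n + k − N. Let v : ℝ^{N-1} → [0,∞] be measurable with v > 0 a.e., v(x') < ∞ for a.e. x', and v(x') ≥ c ∫_{ℝ^{N-1}} v(y')^p |x'-y'|^{-(k-1)} dy' for a.e. x' ∈ ℝ^{N-1}. Then for every n ≥ 0 with γ_n > 0 there exists a constant C_n > 0 such that v(x') ≥ C_n |x'|^{-γ_n} for a.e. x' ∈ ℝ^{N-1} with |x'| > 1. -/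

import Mathlib

open MeasureTheory ENNReal Filter

noncomputable section

/-- The point `(y', t) ∈ ℝ^N` for `y' ∈ ℝ^{N-1}`, `t ∈ ℝ`. -/
def up (N : ℕ) (y' : EuclideanSpace ℝ (Fin (N - 1))) (t : ℝ) : EuclideanSpace ℝ (Fin N) :=
  (WithLp.equiv 2 (Fin N → ℝ)).symm fun i => if h : (i : ℕ) < N - 1 then y' ⟨i, h⟩ else t

/-- The last coordinate `x_N` of `x ∈ ℝ^N`. -/
def ht (N : ℕ) (x : EuclideanSpace ℝ (Fin N)) : ℝ :=
  if h : N - 1 < N then x ⟨N - 1, h⟩ else 0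

/-- Reflection `x̄ = (x', -x_N)` of `x = (x', x_N)` in the hyperplane `x_N = 0`. -/
def reflN (N : ℕ) (x : EuclideanSpace ℝ (Fin N)) : EuclideanSpace ℝ (Fin N) :=
  (WithLp.equiv 2 (Fin N → ℝ)).symm fun i => if (i : ℕ) < N - 1 then x i else -x i

/-- Surface area `σ_N` of the unit sphere in `ℝ^N` (equal to `N` times the unit ball volume). -/
def sphereArea (N : ℕ) : ℝ :=
  N * (volume (Metric.ball (0 : EuclideanSpace ℝ (Fin N)) 1)).toReal

/-- The open upper half space `ℝ^N_+ = ℝ^{N-1} × (0,∞)`. -/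
def upperHalf (N : ℕ) : Set (EuclideanSpace ℝ (Fin N)) := {x | 0 < ht N x}

/-- `H_u(x') = ∫_{ℝ^{N-1}} u(y',0)^p |x'-y'|^{-k} dy'`. -/
def Hu (N : ℕ) (p k : ℝ) (u : EuclideanSpace ℝ (Fin N) → ℝ)
    (x' : EuclideanSpace ℝ (Fin (N - 1))) : ℝ≥0∞ :=
  ∫⁻ y', ENNReal.ofReal (u (up N y' 0)) ^ p * ENNReal.ofReal ‖x' - y'‖ ^ (-k)

/-- The Newtonian potential `U^ν(x) = (1/((N-2)σ_N)) ∫ |x-y|^{2-N} dν(y)`. -/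
def NewtPot (N : ℕ) (ν : Measure (EuclideanSpace ℝ (Fin N)))
    (x : EuclideanSpace ℝ (Fin N)) : ℝ :=
  (((N : ℝ) - 2) * sphereArea N)⁻¹ * (∫⁻ y, ENNReal.ofReal ‖x - y‖ ^ ((2:ℝ) - N) ∂ν).toReal

/-- The Green potential `∫_{ℝ^N_+} G(x,y) dμ(y)` for the Neumann Green function
`G(x,y) = (|x-y|^{2-N} + |x̄-y|^{2-N})/((N-2)σ_N)` of the half space. -/
def GreenPot (N : ℕ) (μ : Measure (EuclideanSpace ℝ (Fin N)))
    (x : EuclideanSpace ℝ (Fin N)) : ℝ :=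
  (((N : ℝ) - 2) * sphereArea N)⁻¹ *
    (∫⁻ y, (ENNReal.ofReal ‖x - y‖ ^ ((2:ℝ) - N)
          + ENNReal.ofReal ‖reflN N x - y‖ ^ ((2:ℝ) - N)) ∂μ).toReal

/-- `μ` is a nonzero Radon (locally finite Borel) measure whose support is contained in the
open upper half space and whose Newtonian potential is finite everywhere. -/
def AdmissibleMeasure (N : ℕ) (μ : Measure (EuclideanSpace ℝ (Fin N))) : Prop :=
  μ ≠ 0 ∧ IsLocallyFiniteMeasure μ ∧
    (∃ F : Set (EuclideanSpace ℝ (Fin N)), IsClosed F ∧ F ⊆ upperHalf N ∧ μ Fᶜ = 0) ∧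
    (∀ x, (∫⁻ y, ENNReal.ofReal ‖x - y‖ ^ ((2:ℝ) - N) ∂μ) < ⊤)

/-- A measurable function `u` is a positive solution of problem (1.1):
(i) `u > 0` a.e. in `ℝ^N_+`, and for a.e. `x' ∈ ℝ^{N-1}`, `u(z) → u(x',0)` as `z → (x',0)`
with `z ∈ ℝ^N_+`;
(ii) `H_u < ∞` a.e. in `ℝ^{N-1}`, and `∫_{ℝ^{N-1}} H_u(y')|x-(y',0)|^{2-N} dy' < ∞` for
a.e. `x ∈ ℝ^N_+`;
(iii) `u(x) = ∫_{ℝ^N_+} G(x,y) dμ(y)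
　　　　+ (2λ/((N-2)σ_N)) ∫∫ u(z',0)^p |x-(y',0)|^{2-N} |y'-z'|^{-k} dz' dy'`
for a.e. `x ∈ ℝ^N_+`. -/
def IsPosSolution (N : ℕ) (p lam k : ℝ) (μ : Measure (EuclideanSpace ℝ (Fin N)))
    (u : EuclideanSpace ℝ (Fin N) → ℝ) : Prop :=
  Measurable u ∧
  (∀ᵐ x ∂(volume.restrict (upperHalf N)), 0 < u x) ∧
  (∀ᵐ x' ∂(volume : Measure (EuclideanSpace ℝ (Fin (N - 1)))),
    Tendsto u (nhdsWithin (up N x' 0) (upperHalf N)) (nhds (u (up N x' 0)))) ∧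
  (∀ᵐ x' ∂(volume : Measure (EuclideanSpace ℝ (Fin (N - 1)))), Hu N p k u x' < ⊤) ∧
  (∀ᵐ x ∂(volume.restrict (upperHalf N)),
    (∫⁻ y', Hu N p k u y' * ENNReal.ofReal ‖x - up N y' 0‖ ^ ((2:ℝ) - N)) < ⊤) ∧
  (∀ᵐ x ∂(volume.restrict (upperHalf N)),
    ENNReal.ofReal (u x) =
      ENNReal.ofReal (((N : ℝ) - 2) * sphereArea N)⁻¹ *
        (∫⁻ y, (ENNReal.ofReal ‖x - y‖ ^ ((2:ℝ) - N)
              + ENNReal.ofReal ‖reflN N x - y‖ ^ ((2:ℝ) - N)) ∂μ) +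
      ENNReal.ofReal (2 * lam / (((N : ℝ) - 2) * sphereArea N)) *
        ∫⁻ y', ENNReal.ofReal ‖x - up N y' 0‖ ^ ((2:ℝ) - N) * Hu N p k u y')

/-- A measurable function `u` is a positive solution of problem (1.1) with `μ ≡ 0`:
conditions (i), (ii) as above and
(iii) `u(x) = (2λ/((N-2)σ_N)) ∫∫ u(z',0)^p |x-(y',0)|^{2-N} |y'-z'|^{-k} dz' dy'`
for a.e. `x ∈ ℝ^N_+`. -/
def IsPosSolution0 (N : ℕ) (p lam k : ℝ) (u : EuclideanSpace ℝ (Fin N) → ℝ) : Prop :=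
  Measurable u ∧
  (∀ᵐ x ∂(volume.restrict (upperHalf N)), 0 < u x) ∧
  (∀ᵐ x' ∂(volume : Measure (EuclideanSpace ℝ (Fin (N - 1)))),
    Tendsto u (nhdsWithin (up N x' 0) (upperHalf N)) (nhds (u (up N x' 0)))) ∧
  (∀ᵐ x' ∂(volume : Measure (EuclideanSpace ℝ (Fin (N - 1)))), Hu N p k u x' < ⊤) ∧
  (∀ᵐ x ∂(volume.restrict (upperHalf N)),
    (∫⁻ y', Hu N p k u y' * ENNReal.ofReal ‖x - up N y' 0‖ ^ ((2:ℝ) - N)) < ⊤) ∧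
  (∀ᵐ x ∂(volume.restrict (upperHalf N)),
    ENNReal.ofReal (u x) =
      ENNReal.ofReal (2 * lam / (((N : ℝ) - 2) * sphereArea N)) *
        ∫⁻ y', ENNReal.ofReal ‖x - up N y' 0‖ ^ ((2:ℝ) - N) * Hu N p k u y')

/-- The boundary trace `x' ↦ u(x',0)` belongs to `L^q_loc(ℝ^{N-1})`. -/
def BdryLocLp (N : ℕ) (q : ℝ) (u : EuclideanSpace ℝ (Fin N) → ℝ) : Prop :=
  ∀ K : Set (EuclideanSpace ℝ (Fin (N - 1))), IsCompact K →
    MemLp (fun x' => u (up N x' 0)) (ENNReal.ofReal q) (volume.restrict K)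

/-! The potential `∫ v(y)^p |x - y|^{-(k-1)} dy` is at least `(|x| + ρ)^{-(k-1)}` times the mass
of `v^p` on any region inside `B(0, ρ)`. Taking the unit ball, where `v^p` has positive mass,
gives `v(x) ≳ |x|^{-(k-1)} = |x|^{-γ₀}`. Given `v(y) ≳ |y|^{-γ}` for `|y| > 1`, take the annulus
`|x| < |y| < 2|x|` instead: its volume is `≍ |x|^{N-1}` and `v^p ≳ |x|^{-pγ}` on it, so
`v(x) ≳ |x|^{-(k-1) - pγ + (N-1)} = |x|^{-(pγ + k - N)}`. -/

open Metric Module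

def rieszPotential {E : Type*} [SeminormedAddCommGroup E] [MeasurableSpace E] (μ : Measure E)
    (s : ℝ) (f : E → ℝ≥0∞) (x : E) : ℝ≥0∞ :=
  ∫⁻ y, f y * ENNReal.ofReal ‖x - y‖ ^ (-s) ∂μ

def HasPowerLowerBound {E : Type*} [SeminormedAddCommGroup E] [MeasurableSpace E]
    (μ : Measure E) (v : E → ℝ≥0∞) (γ : ℝ) : Prop :=
  ∃ C > 0, ∀ᵐ x ∂μ, 1 < ‖x‖ → ENNReal.ofReal (C * ‖x‖ ^ (-γ)) ≤ v x

theorem ENNReal.ofReal_rpow_neg_le_ofReal_rpow_neg {a b s : ℝ} (hs : 0 < s) (hba : b ≤ a) :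
    ENNReal.ofReal (a ^ (-s)) ≤ ENNReal.ofReal b ^ (-s) := by
  rcases le_or_gt b 0 with hb | hb
  · rw [ENNReal.ofReal_eq_zero.2 hb, ENNReal.zero_rpow_of_neg (neg_neg_of_pos hs)]
    exact le_top
  · rw [ENNReal.ofReal_rpow_of_pos hb]
    exact ENNReal.ofReal_le_ofReal (Real.rpow_le_rpow_of_nonpos hb hba (neg_nonpos.2 hs.le))

theorem addHaar_ball_diff_closedBall {E : Type*} [NormedAddCommGroup E] [NormedSpace ℝ E]
    [MeasurableSpace E] [BorelSpace E] [FiniteDimensional ℝ E] (μ : Measure E)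
    [μ.IsAddHaarMeasure] (x : E) {r R : ℝ} (hr : 0 ≤ r) (hrR : r < R) :
    μ (ball x R \ closedBall x r) =
      ENNReal.ofReal (R ^ finrank ℝ E - r ^ finrank ℝ E) * μ (ball 0 1) := by
  rw [measure_sdiff (closedBall_subset_ball hrR) measurableSet_closedBall.nullMeasurableSet
      measure_closedBall_lt_top.ne, Measure.addHaar_ball_of_pos μ x (hr.trans_lt hrR),
    Measure.addHaar_closedBall μ x hr, ← ENNReal.sub_mul (fun _ _ => measure_ball_lt_top.ne),
    ← ENNReal.ofReal_sub _ (by positivity)]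

section RieszLowerBound

variable {E : Type*} [SeminormedAddCommGroup E] [MeasurableSpace E] {μ : Measure E}
  {v : E → ℝ≥0∞} {c p s : ℝ}

theorem ofReal_rpow_mul_setLIntegral_le_rieszPotential (f : E → ℝ≥0∞) {S : Set E}
    (hS : MeasurableSet S) {ρ : ℝ} (hSρ : S ⊆ closedBall 0 ρ) (hs : 0 < s) (x : E) :
    ENNReal.ofReal ((‖x‖ + ρ) ^ (-s)) * ∫⁻ y in S, f y ∂μ ≤ rieszPotential μ s f x := by
  rw [← lintegral_const_mul' _ _ ENNReal.ofReal_ne_top]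
  calc ∫⁻ y in S, ENNReal.ofReal ((‖x‖ + ρ) ^ (-s)) * f y ∂μ
      ≤ ∫⁻ y in S, f y * ENNReal.ofReal ‖x - y‖ ^ (-s) ∂μ := by
        refine setLIntegral_mono' hS fun y hy => ?_
        rw [mul_comm]
        gcongr
        refine ENNReal.ofReal_rpow_neg_le_ofReal_rpow_neg hs ?_
        calc ‖x - y‖ ≤ ‖x‖ + ‖y‖ := norm_sub_le x y
          _ ≤ ‖x‖ + ρ := by gcongr; exact mem_closedBall_zero_iff.1 (hSρ hy)
    _ ≤ rieszPotential μ s f x := setLIntegral_le_lintegral S _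

theorem ofReal_mul_setLIntegral_le_of_rieszPotential_le (hs : 0 < s)
    (hineq : ∀ᵐ x ∂μ, ENNReal.ofReal c * rieszPotential μ s (fun y => v y ^ p) x ≤ v x) :
    ∀ᵐ x ∂μ, ∀ ρ : ℝ, ∀ S : Set E, MeasurableSet S → S ⊆ closedBall 0 ρ →
      ENNReal.ofReal c * ENNReal.ofReal ((‖x‖ + ρ) ^ (-s)) * ∫⁻ y in S, v y ^ p ∂μ ≤ v x := by
  filter_upwards [hineq] with x hx ρ S hS hSρ
  rw [mul_assoc]
  exact (mul_le_mul_right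
    (ofReal_rpow_mul_setLIntegral_le_rieszPotential _ hS hSρ hs x) _).trans hx

theorem hasPowerLowerBound_of_rieszPotential_le [OpensMeasurableSpace E] [μ.IsOpenPosMeasure]
    (hp : 0 ≤ p) (hs : 0 < s) (hc : 0 < c)
    (hv : Measurable v) (hpos : ∀ᵐ x ∂μ, 0 < v x)
    (hineq : ∀ᵐ x ∂μ, ENNReal.ofReal c * rieszPotential μ s (fun y => v y ^ p) x ≤ v x) :
    HasPowerLowerBound μ v s := by
  have hmass : 0 < ∫⁻ y in ball (0 : E) 1, v y ^ p ∂μ := by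
    rw [setLIntegral_pos_iff (hv.pow_const p)]
    refine (measure_ball_pos μ 0 one_pos).trans_le (measure_mono_ae ?_)
    filter_upwards [hpos] with y hy hyB
    exact ⟨(ENNReal.rpow_pos_of_nonneg hy hp).ne', hyB⟩
  obtain ⟨a, -, ha0, haA⟩ := ENNReal.lt_iff_exists_real_btwn.1 hmass
  have ha0 : 0 < a := ENNReal.ofReal_pos.1 ha0
  refine ⟨c * 2 ^ (-s) * a, by positivity, ?_⟩
  filter_upwards [ofReal_mul_setLIntegral_le_of_rieszPotential_le hs hineq] with x hx hx1
  refine le_trans ?_ (hx 1 _ measurableSet_ball ball_subset_closedBall)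
  rw [← ENNReal.ofReal_mul hc.le]
  refine le_trans ?_ (mul_le_mul_right haA.le _)
  rw [← ENNReal.ofReal_mul (by positivity)]
  refine ENNReal.ofReal_le_ofReal ?_
  have hkernel : (2 * ‖x‖) ^ (-s) ≤ (‖x‖ + 1) ^ (-s) :=
    Real.rpow_le_rpow_of_nonpos (by positivity) (by linarith) (neg_nonpos.2 hs.le)
  calc c * 2 ^ (-s) * a * ‖x‖ ^ (-s) = c * (2 * ‖x‖) ^ (-s) * a := by
        rw [Real.mul_rpow zero_le_two (norm_nonneg x)]; ring
    _ ≤ c * (‖x‖ + 1) ^ (-s) * a := by gcongr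

end RieszLowerBound

section PowerLowerBound

variable {E : Type*} [NormedAddCommGroup E] [NormedSpace ℝ E] [MeasurableSpace E] [BorelSpace E]
  [FiniteDimensional ℝ E] {μ : Measure E} [μ.IsAddHaarMeasure] {v : E → ℝ≥0∞} {c p s : ℝ}

theorem HasPowerLowerBound.of_rieszPotential_le [Nontrivial E] {γ : ℝ}
    (hbound : HasPowerLowerBound μ v γ) (hγ : 0 ≤ γ) (hp : 0 ≤ p) (hs : 0 < s) (hc : 0 < c)
    (hineq : ∀ᵐ x ∂μ, ENNReal.ofReal c * rieszPotential μ s (fun y => v y ^ p) x ≤ v x) :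
    HasPowerLowerBound μ v (p * γ + s - finrank ℝ E) := by
  obtain ⟨C, hC, hvC⟩ := hbound
  set d := finrank ℝ E
  set b := (μ (ball 0 1)).toReal
  have hb : 0 < b := ENNReal.toReal_pos (measure_ball_pos μ 0 one_pos).ne' measure_ball_lt_top.ne
  have h2d : (1 : ℝ) < 2 ^ d := one_lt_pow₀ (by norm_num) finrank_pos.ne'
  refine ⟨c * 3 ^ (-s) * (C * 2 ^ (-γ)) ^ p * (2 ^ d - 1) * b, ?_, ?_⟩
  · have : 0 < (2 : ℝ) ^ d - 1 := by linarith
    positivity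
  filter_upwards [ofReal_mul_setLIntegral_le_of_rieszPotential_le hs hineq] with x hx hx1
  set R := ‖x‖
  have hR : 0 < R := by linarith
  set S := ball (0 : E) (2 * R) \ closedBall 0 R
  have hvS : ∀ᵐ y ∂μ, y ∈ S → ENNReal.ofReal ((C * (2 * R) ^ (-γ)) ^ p) ≤ v y ^ p := by
    filter_upwards [hvC] with y hy hyS
    have hy2R : ‖y‖ < 2 * R := mem_ball_zero_iff.1 hyS.1
    have hRy : R < ‖y‖ := lt_of_not_ge fun h => hyS.2 (mem_closedBall_zero_iff.2 h)
    rw [← ENNReal.ofReal_rpow_of_nonneg (by positivity) hp]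
    refine ENNReal.rpow_le_rpow (le_trans (ENNReal.ofReal_le_ofReal ?_) (hy (hx1.trans hRy))) hp
    exact mul_le_mul_of_nonneg_left
      (Real.rpow_le_rpow_of_nonpos (by linarith) hy2R.le (neg_nonpos.2 hγ)) hC.le
  have hmass : ENNReal.ofReal ((C * (2 * R) ^ (-γ)) ^ p * (((2 * R) ^ d - R ^ d) * b)) ≤
      ∫⁻ y in S, v y ^ p ∂μ := by
    have hRd : R ^ d ≤ (2 * R) ^ d := pow_le_pow_left₀ hR.le (by linarith) d
    rw [ENNReal.ofReal_mul (by positivity), ENNReal.ofReal_mul (by nlinarith),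
      ENNReal.ofReal_toReal measure_ball_lt_top.ne,
      ← addHaar_ball_diff_closedBall μ 0 hR.le (by linarith), ← setLIntegral_const]
    exact setLIntegral_mono_ae' (measurableSet_ball.diff measurableSet_closedBall) hvS
  refine le_trans (le_of_eq ?_) ((mul_le_mul_right hmass _).trans
    (hx (2 * R) S (measurableSet_ball.diff measurableSet_closedBall) (Set.sdiff_subset.trans
      ball_subset_closedBall)))
  rw [← ENNReal.ofReal_mul hc.le, ← ENNReal.ofReal_mul (by positivity)]
  congr 1
  have hkernel : (R + 2 * R) ^ (-s) = 3 ^ (-s) * R ^ (-s) := by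
    rw [← Real.mul_rpow zero_le_three hR.le]; ring_nf
  have hvp : (C * (2 * R) ^ (-γ)) ^ p = (C * 2 ^ (-γ)) ^ p * R ^ (-(γ * p)) := by
    rw [Real.mul_rpow zero_le_two hR.le, ← mul_assoc, Real.mul_rpow (by positivity) (by positivity),
      ← Real.rpow_mul hR.le, neg_mul]
  have hpow : R ^ (-(p * γ + s - d)) = R ^ d * (R ^ (-(γ * p)) * R ^ (-s)) := by
    rw [show -(p * γ + s - d) = (d : ℝ) + (-(γ * p) + -s) by ring, Real.rpow_add hR,
      Real.rpow_add hR, Real.rpow_natCast]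
  rw [hkernel, hvp, hpow, mul_pow]
  ring

end PowerLowerBound

theorem gamma_sequence_lower_bound_general
    (N : ℕ) (k p c : ℝ)
    (hk1 : 1 < k) (hkN : k < (N : ℝ) - 1)
    (hp0 : 0 < p) (hc : 0 < c)
    (γ : ℕ → ℝ) (hγ0 : γ 0 = k - 1) (hγ : ∀ n, γ (n + 1) = p * γ n + k - N)
    (v : EuclideanSpace ℝ (Fin (N - 1)) → ℝ≥0∞) (hv : Measurable v)
    (hpos : ∀ᵐ x' ∂(volume : Measure (EuclideanSpace ℝ (Fin (N - 1)))), 0 < v x')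
    (hineq : ∀ᵐ x' ∂(volume : Measure (EuclideanSpace ℝ (Fin (N - 1)))),
      ENNReal.ofReal c * ∫⁻ y', v y' ^ p * ENNReal.ofReal ‖x' - y'‖ ^ (-(k - 1)) ≤ v x') :
    ∀ n : ℕ, 0 < γ n →
      ∃ C > 0, ∀ᵐ x' ∂(volume : Measure (EuclideanSpace ℝ (Fin (N - 1)))),
        1 < ‖x'‖ → ENNReal.ofReal (C * ‖x'‖ ^ (-γ n)) ≤ v x' := by
  have hN : 2 < N := by exact_mod_cast (show (2 : ℝ) < N by linarith)
  have hd : (finrank ℝ (EuclideanSpace ℝ (Fin (N - 1))) : ℝ) = N - 1 := by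
    rw [finrank_euclideanSpace_fin, Nat.cast_sub (by omega), Nat.cast_one]
  have : Nontrivial (EuclideanSpace ℝ (Fin (N - 1))) :=
    Module.nontrivial_of_finrank_pos (R := ℝ) (by rw [finrank_euclideanSpace_fin]; omega)
  have hs : 0 < k - 1 := by linarith
  intro n
  induction n with
  | zero =>
    intro _
    rw [hγ0]
    exact hasPowerLowerBound_of_rieszPotential_le hp0.le hs hc hv hpos hineq
  | succ n ih =>
    intro hγn
    have hγn' : 0 < γ n := by nlinarith [hγ n]
    have hstep := HasPowerLowerBound.of_rieszPotential_le (ih hγn') hγn'.le hp0.le hs hc hineq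
    rwa [hd, show p * γ n + (k - 1) - (N - 1) = γ (n + 1) by rw [hγ n]; ring] at hstep

/-- Lemma 3.2(ii): with `γ₀ = k-1`, `γ_{n+1} = pγ_n + k - N`, whenever `γ_n > 0` there is
`C_n > 0` such that `v(x') ≥ C_n |x'|^{-γ_n}` for a.e. `|x'| > 1`. -/
theorem gamma_sequence_lower_bound
    (N : ℕ) (hN : 3 ≤ N) (k p c : ℝ)
    (hk1 : 1 < k) (hkN : k < (N : ℝ) - 1)
    (hp0 : 0 < p) (hp : p < ((N : ℝ) - 1) / (k - 1)) (hc : 0 < c)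
    (γ : ℕ → ℝ) (hγ0 : γ 0 = k - 1) (hγ : ∀ n, γ (n + 1) = p * γ n + k - N)
    (v : EuclideanSpace ℝ (Fin (N - 1)) → ℝ≥0∞) (hv : Measurable v)
    (hpos : ∀ᵐ x' ∂(volume : Measure (EuclideanSpace ℝ (Fin (N - 1)))), 0 < v x')
    (hfin : ∀ᵐ x' ∂(volume : Measure (EuclideanSpace ℝ (Fin (N - 1)))), v x' < ⊤)
    (hineq : ∀ᵐ x' ∂(volume : Measure (EuclideanSpace ℝ (Fin (N - 1)))),
      ENNReal.ofReal c * ∫⁻ y', v y' ^ p * ENNReal.ofReal ‖x' - y'‖ ^ (-(k - 1)) ≤ v x') :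
    ∀ n : ℕ, 0 < γ n →
      ∃ C > 0, ∀ᵐ x' ∂(volume : Measure (EuclideanSpace ℝ (Fin (N - 1)))),
        1 < ‖x'‖ → ENNReal.ofReal (C * ‖x'‖ ^ (-γ n)) ≤ v x' :=
  gamma_sequence_lower_bound_general N k p c hk1 hkN hp0 hc γ hγ0 hγ v hv hpos hineq

end
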